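/- arXiv:2010.12329 — 4 statements merged into one kernel-verified Lean document; each statement's English description precedes it below -/
import Mathlib

section
/- Let T be an ε-critical tournament with |T| = n, and let ε, c > 0 be constants with 0 < c ≤ 1 and ε < log_{c/2}(1/2). Then for every two disjoint subsets X, Y ⊆ V(T) with |X| ≥ cn and |Y| ≥ cn, there exist an integer k ≥ cn/2 and pairwise distinct vertices x_1,…,x_k ∈ X and pairwise distinct vertices y_1,…,y_k ∈ Y such that (y_i, x_i) is an arc of T for i = 1,…,k. -/
open scoped Classical

/-- A tournament on vertex set `Fin n`: for every pair of distinct vertices exactly one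
of the two possible arcs is present. -/
structure Tournament where
  n : ℕ
  adj : Fin n → Fin n → Prop
  irrefl : ∀ v, ¬ adj v v
  total : ∀ u v : Fin n, u ≠ v → adj u v ∨ adj v u
  asymm : ∀ u v : Fin n, adj u v → ¬ adj v u

namespace Tournament

/-- A set of vertices inducing a transitive subtournament. -/
def IsTransSet (T : Tournament) (X : Finset (Fin T.n)) : Prop :=
  ∀ u ∈ X, ∀ v ∈ X, ∀ w ∈ X, T.adj u v → T.adj v w → T.adj u w

/-- The largest size of a transitive subset of `X`. -/
noncomputable def trSet (T : Tournament) (X : Finset (Fin T.n)) : ℕ :=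
  sSup {k | ∃ Y ⊆ X, T.IsTransSet Y ∧ Y.card = k}

/-- The largest size of a transitive subtournament of `T`. -/
noncomputable def tr (T : Tournament) : ℕ :=
  T.trSet Finset.univ

/-- `T` is `ε`-critical: `tr T < |T| ^ ε` but every proper subtournament `S`
satisfies `tr S ≥ |S| ^ ε`. -/
def EpsCritical (T : Tournament) (ε : ℝ) : Prop :=
  ((T.tr : ℝ) < (T.n : ℝ) ^ ε) ∧
    ∀ X : Finset (Fin T.n), X ≠ Finset.univ → ((X.card : ℝ) ^ ε ≤ (T.trSet X : ℝ))

/-- `T` contains `H` (as an induced subtournament). -/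
def Contains (T H : Tournament) : Prop :=
  ∃ f : Fin H.n → Fin T.n, Function.Injective f ∧ ∀ u v, (H.adj u v ↔ T.adj (f u) (f v))

/-- Number of arcs directed from `X` to `Y`. -/
noncomputable def arcsCount (T : Tournament) (X Y : Finset (Fin T.n)) : ℕ :=
  ((X ×ˢ Y).filter fun p => T.adj p.1 p.2).card

/-- Directed density from `X` to `Y`. -/
noncomputable def density (T : Tournament) (X Y : Finset (Fin T.n)) : ℝ :=
  (T.arcsCount X Y : ℝ) / ((X.card : ℝ) * (Y.card : ℝ))

/-- `u,v` are joined by a backward arc under the natural ordering of `Fin T.n`. -/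
def Bedge (T : Tournament) (u v : Fin T.n) : Prop :=
  (T.adj u v ∧ v < u) ∨ (T.adj v u ∧ u < v)

/-- The tournament obtained by re-ordering the vertices of `T` along `σ`;
vertex `i` of the result is vertex `σ i` of `T`. -/
def reorder (T : Tournament) (σ : Fin T.n ≃ Fin T.n) : Tournament where
  n := T.n
  adj u v := T.adj (σ u) (σ v)
  irrefl v := T.irrefl (σ v)
  total u v h := T.total _ _ fun e => h (σ.injective e)
  asymm u v h := T.asymm _ _ h

/-- The rank of `u` inside a transitive set `S`: the number of vertices of `S` beating `u`. -/
noncomputable def rankIn (T : Tournament) (S : Finset (Fin T.n)) (u : Fin T.n) : ℕ :=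
  (S.filter fun v => T.adj v u).card

end Tournament

/-- `H` satisfies the Erdős–Hajnal conjecture (for tournaments). -/
def SatisfiesEH (H : Tournament) : Prop :=
  ∃ ε : ℝ, 0 < ε ∧ ∀ T : Tournament, ¬ T.Contains H → ((T.n : ℝ) ^ ε ≤ (T.tr : ℝ))

/-- A smooth `(c, λ, w)`-structure in the tournament `T`. -/
structure SmoothStructure (T : Tournament) (c lam : ℝ) (w : List Bool) where
  S : Fin w.length → Finset (Fin T.n)
  disj : ∀ i j, i ≠ j → Disjoint (S i) (S j)
  linear : ∀ i, w.get i = false → c * T.n ≤ ((S i).card : ℝ)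
  transSet : ∀ i, w.get i = true → T.IsTransSet (S i)
  transSize : ∀ i, w.get i = true → c * T.tr ≤ ((S i).card : ℝ)
  smoothFrom : ∀ i j, i < j → ∀ v ∈ S i, 1 - lam ≤ T.density {v} (S j)
  smoothTo : ∀ i j, i < j → ∀ v ∈ S j, 1 - lam ≤ T.density (S i) {v}

/-! ### Stars and galaxies (under the natural ordering of the vertices) -/

/-- `W` is a right star of `T` under the natural ordering, with center `c`:
the backward arcs inside `W` are exactly the arcs from `c` (the last vertex of `W`)
to the other vertices of `W`. -/
def IsRightStar (T : Tournament) (W : Finset (Fin T.n)) (c : Fin T.n) : Prop :=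
  c ∈ W ∧ (∀ u ∈ W, u ≤ c) ∧ (∀ u ∈ W, u ≠ c → T.adj c u) ∧
    ∀ u ∈ W, ∀ v ∈ W, u ≠ c → v ≠ c → u < v → T.adj u v

/-- `W` is a left star of `T` under the natural ordering, with center `c`:
the backward arcs inside `W` are exactly the arcs from the other vertices of `W`
to `c` (the first vertex of `W`). -/
def IsLeftStar (T : Tournament) (W : Finset (Fin T.n)) (c : Fin T.n) : Prop :=
  c ∈ W ∧ (∀ u ∈ W, c ≤ u) ∧ (∀ u ∈ W, u ≠ c → T.adj u c) ∧
    ∀ u ∈ W, ∀ v ∈ W, u ≠ c → v ≠ c → u < v → T.adj u v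

/-- A star of `T` under the natural ordering, with center `c`. -/
def IsStar (T : Tournament) (W : Finset (Fin T.n)) (c : Fin T.n) : Prop :=
  2 ≤ W.card ∧ (IsRightStar T W c ∨ IsLeftStar T W c)

/-! ### β-asteroids -/

/-- `u` realizes exactly the backward arcs in `bk` (all other pairs are forward). -/
def ArcsExactly (T : Tournament) (u : Fin 7 → Fin T.n) (bk : List (Fin 7 × Fin 7)) : Prop :=
  (∀ p q : Fin 7, (p, q) ∈ bk → T.adj (u p) (u q)) ∧
  (∀ p q : Fin 7, p < q → (q, p) ∉ bk → T.adj (u p) (u q))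

/-- Backward arcs of a left β1-asteroid: (u₃,u₁),(u₅,u₂),(u₆,u₁),(u₇,u₄),(u₇,u₅). -/
def lb1Arcs : List (Fin 7 × Fin 7) := [(2,0),(4,1),(5,0),(6,3),(6,4)]
/-- Backward arcs of a left β2-asteroid: (u₃,u₁),(u₅,u₂),(u₆,u₄),(u₆,u₅),(u₇,u₁). -/
def lb2Arcs : List (Fin 7 × Fin 7) := [(2,0),(4,1),(5,3),(5,4),(6,0)]
/-- Backward arcs of a right β1-asteroid: (u₃,u₁),(u₄,u₁),(u₆,u₃),(u₇,u₂),(u₇,u₅). -/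
def rb1Arcs : List (Fin 7 × Fin 7) := [(2,0),(3,0),(5,2),(6,1),(6,4)]
/-- Backward arcs of a right β2-asteroid: (u₃,u₂),(u₄,u₂),(u₆,u₃),(u₇,u₁),(u₇,u₅). -/
def rb2Arcs : List (Fin 7 × Fin 7) := [(2,1),(3,1),(5,2),(6,0),(6,4)]

/-- For a left β-asteroid, `u₁,…,u₅` are consecutive and `u₆,u₇` are consecutive. -/
def LeftConsec (T : Tournament) (u : Fin 7 → Fin T.n) : Prop :=
  (u 0).val + 1 = (u 1).val ∧ (u 1).val + 1 = (u 2).val ∧ (u 2).val + 1 = (u 3).val ∧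
  (u 3).val + 1 = (u 4).val ∧ (u 5).val + 1 = (u 6).val

/-- For a right β-asteroid, `u₁,u₂` are consecutive and `u₃,…,u₇` are consecutive. -/
def RightConsec (T : Tournament) (u : Fin 7 → Fin T.n) : Prop :=
  (u 0).val + 1 = (u 1).val ∧ (u 2).val + 1 = (u 3).val ∧ (u 3).val + 1 = (u 4).val ∧
  (u 4).val + 1 = (u 5).val ∧ (u 5).val + 1 = (u 6).val

/-- `u` lists the vertices (in order) of a β-asteroid of `T` under the natural ordering. -/
def IsBetaAsteroid (T : Tournament) (u : Fin 7 → Fin T.n) : Prop :=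
  StrictMono u ∧
  ((LeftConsec T u ∧ (ArcsExactly T u lb1Arcs ∨ ArcsExactly T u lb2Arcs)) ∨
   (RightConsec T u ∧ (ArcsExactly T u rb1Arcs ∨ ArcsExactly T u rb2Arcs)))

/-- An asterism under the natural ordering of its vertices:
the vertex set is the disjoint union of the β-asteroids `A i`, the stars `S j`
(with centers `ctr j`) and singleton components of the backward-arc graph;
every backward arc lies inside one β-asteroid or one star, no center of a star lies
between leaves of another star, and no vertex of a β-asteroid lies between leaves of a star. -/
def IsAsterismUnderId (T : Tournament) : Prop :=
  ∃ (l m : ℕ) (A : Fin l → Fin 7 → Fin T.n) (S : Fin m → Finset (Fin T.n))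
      (ctr : Fin m → Fin T.n),
    (∀ i, IsBetaAsteroid T (A i)) ∧
    (∀ j, IsStar T (S j) (ctr j)) ∧
    (∀ i i' : Fin l, i ≠ i' → ∀ p q, A i p ≠ A i' q) ∧
    (∀ j j' : Fin m, j ≠ j' → Disjoint (S j) (S j')) ∧
    (∀ (i : Fin l) (j : Fin m) (p : Fin 7), A i p ∉ S j) ∧
    (∀ u v, T.Bedge u v →
      (∃ i, (∃ p, A i p = u) ∧ (∃ q, A i q = v)) ∨ (∃ j, u ∈ S j ∧ v ∈ S j)) ∧
    (∀ j j' : Fin m, j ≠ j' → ∀ u ∈ S j, u ≠ ctr j → ∀ w ∈ S j, w ≠ ctr j →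
      ¬ (u < ctr j' ∧ ctr j' < w)) ∧
    (∀ (i : Fin l) (j : Fin m) (p : Fin 7), ∀ u ∈ S j, u ≠ ctr j → ∀ w ∈ S j, w ≠ ctr j →
      ¬ (u < A i p ∧ A i p < w))

/-- `H` is an asterism: some ordering of its vertices witnesses the asterism structure. -/
def IsAsterism (H : Tournament) : Prop :=
  ∃ σ : Fin H.n ≃ Fin H.n, IsAsterismUnderId (H.reorder σ)

/-! ### Spiders (under the natural ordering of the vertices) -/

/-- The backward arcs of a spider with interior positions `t,…,t+4` and
leg-to-center assignment `cen` (values in `{t, t+4}`):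
the petal arcs `(t+3,t)`, `(t+4,t+1)`, the arcs from a center to each of its earlier legs,
and the arcs from each later leg to its center. -/
def SpiderBk {nn : ℕ} (t : ℕ) (cen : Fin nn → ℕ) (i j : Fin nn) : Prop :=
  (i.val = t + 3 ∧ j.val = t) ∨ (i.val = t + 4 ∧ j.val = t + 1) ∨
  (j.val < t ∧ i.val = cen j) ∨ (t + 4 < i.val ∧ j.val = cen i)

/-- The arcs of a spider that get deleted when forming the mutant spider. -/
def SpiderDel {nn : ℕ} (t : ℕ) (cen : Fin nn → ℕ) (i j : Fin nn) : Prop :=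
  (i.val < t ∧ ((cen i = t ∧ j.val = t + 3) ∨ (cen i = t + 4 ∧ j.val = t + 1))) ∨
  (t + 4 < j.val ∧ ((cen j = t + 4 ∧ i.val = t + 1) ∨ (cen j = t ∧ i.val = t + 3)))

/-- A spider of `T` under the natural ordering: an increasing embedding
`emb : Fin nn → Fin T.n` whose interior positions `t,…,t+4` are consecutive vertices of `T`,
whose backward arcs are exactly `SpiderBk`, together with the assignment `cen` of each leg
to one of the two centers (positions `t` and `t+4`).  The field `kind` expresses that the
spider is a left spider (`t = 0`), a right spider (`t+5 = nn`) or a middle spider (legs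
before the interior belong to the first center, legs after it to the second center). -/
structure SpiderAt (T : Tournament) where
  nn : ℕ
  emb : Fin nn → Fin T.n
  mono : StrictMono emb
  t : ℕ
  ht : t + 5 ≤ nn
  consec : ∀ j j' : Fin nn, t ≤ j.val → j'.val ≤ t + 4 → j'.val = j.val + 1 →
    (emb j').val = (emb j).val + 1
  cen : Fin nn → ℕ
  hcen : ∀ j : Fin nn, (j.val < t ∨ t + 4 < j.val) → cen j = t ∨ cen j = t + 4
  kind : t = 0 ∨ t + 5 = nn ∨
    ((∀ j : Fin nn, j.val < t → cen j = t) ∧ ∀ j : Fin nn, t + 4 < j.val → cen j = t + 4)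
  arcsBk : ∀ i j : Fin nn, SpiderBk t cen i j → T.adj (emb i) (emb j)
  arcsFw : ∀ i j : Fin nn, i < j → ¬ SpiderBk t cen j i → T.adj (emb i) (emb j)

namespace SpiderAt

variable {T : Tournament}

/-- The vertex set of the spider. -/
noncomputable def verts (s : SpiderAt T) : Finset (Fin T.n) :=
  Finset.image s.emb Finset.univ

/-- `v` is one of the two centers of the spider. -/
def isCenter (s : SpiderAt T) (v : Fin T.n) : Prop :=
  ∃ j : Fin s.nn, s.emb j = v ∧ (j.val = s.t ∨ j.val = s.t + 4)

/-- `v` is an interior vertex of the spider. -/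
def isInterior (s : SpiderAt T) (v : Fin T.n) : Prop :=
  ∃ j : Fin s.nn, s.emb j = v ∧ s.t ≤ j.val ∧ j.val ≤ s.t + 4

/-- `v` is a leg of the spider, incident to the center at position `c`. -/
def legOf (s : SpiderAt T) (v : Fin T.n) (c : ℕ) : Prop :=
  ∃ j : Fin s.nn, s.emb j = v ∧ (j.val < s.t ∨ s.t + 4 < j.val) ∧ s.cen j = c

/-- The set of legs of the spider incident to the center at position `c`. -/
noncomputable def legsTo (s : SpiderAt T) (c : ℕ) : Finset (Fin T.n) :=
  Finset.image s.emb
    (Finset.univ.filter fun j => (j.val < s.t ∨ s.t + 4 < j.val) ∧ s.cen j = c)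

/-- The set of petals of the spider. -/
noncomputable def petals (s : SpiderAt T) : Finset (Fin T.n) :=
  Finset.image s.emb (Finset.univ.filter fun j => s.t < j.val ∧ j.val < s.t + 4)

/-- The two centers of the spider (`b = 0`: the first, `b = 1`: the second). -/
def centerVert (s : SpiderAt T) (b : Fin 2) : Fin T.n :=
  if b = 0 then s.emb ⟨s.t, by have := s.ht; omega⟩
  else s.emb ⟨s.t + 4, by have := s.ht; omega⟩

end SpiderAt

/-! ### Contracting graph machinery -/

/-- Two nodes (given by their vertex sets) of a contracting graph are adjacent if some
point of one lies between the leftmost and the rightmost points of the other. -/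
def NodeAdj {n : ℕ} {ι : Type*} (N : ι → Finset (Fin n)) (a b : ι) : Prop :=
  (∃ p ∈ N a, ∃ x ∈ N b, ∃ y ∈ N b, x < p ∧ p < y) ∨
  (∃ p ∈ N b, ∃ x ∈ N a, ∃ y ∈ N a, x < p ∧ p < y)

/-- Two nodes lie in the same connected component of the contracting graph. -/
def SamePart {n : ℕ} {ι : Type*} (N : ι → Finset (Fin n)) : ι → ι → Prop :=
  Relation.ReflTransGen (NodeAdj N)

/-- Two vertices lie in the same part of the partition induced by the components of
the contracting graph. -/
def SamePartV {n : ℕ} {ι : Type*} (N : ι → Finset (Fin n)) (u v : Fin n) : Prop :=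
  ∃ a b, u ∈ N a ∧ v ∈ N b ∧ SamePart N a b

/-! ### Clutters -/

/-- A clutter structure on `K` under the natural ordering: `K` is the disjoint union of
the spiders `sp i`, each spider preceding the next one, all backward arcs being within
the spiders (so that the spiders are the components of the backward-arc graph). -/
structure ClutterData (K : Tournament) where
  l : ℕ
  sp : Fin l → SpiderAt K
  cover : ∀ v : Fin K.n, ∃ i j, (sp i).emb j = v
  disj : ∀ i i' : Fin l, i ≠ i' → ∀ j j', (sp i).emb j ≠ (sp i').emb j'
  ordered : ∀ i i' : Fin l, i < i' → ∀ j j', (sp i).emb j < (sp i').emb j'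
  crossFw : ∀ i i' : Fin l, i < i' → ∀ j j', K.adj ((sp i).emb j) ((sp i').emb j')

/-- The nodes of the contracting graph of a clutter: for each spider, the legs
incident to the first center (`q = 0`), the petals (`q = 1`), and the legs incident
to the second center (`q = 2`). -/
noncomputable def clNodes {K : Tournament} (C : ClutterData K) (p : Fin C.l × Fin 3) :
    Finset (Fin K.n) :=
  if p.2 = 0 then (C.sp p.1).legsTo (C.sp p.1).t
  else if p.2 = 1 then (C.sp p.1).petals
  else (C.sp p.1).legsTo ((C.sp p.1).t + 4)

/-- Given a group-slot assignment `gs` on the nodes of (the first `k` spiders of)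
a clutter, the set of vertices belonging to the group with slot `s`. -/
noncomputable def clGrpVerts {K : Tournament} (C : ClutterData K) (k : ℕ) {L : ℕ}
    (gs : Fin C.l → Fin 3 → Fin L) (s : Fin L) : Finset (Fin K.n) :=
  Finset.univ.biUnion fun p : Fin C.l × Fin 3 =>
    if p.1.val < k ∧ gs p.1 p.2 = s then clNodes C p else ∅

/-- A smooth `(c,λ,w)`-structure of `T` which is clutter-associated to the sub-clutter of
`K` formed by its first `k` spiders: the entries of `w` correspond, reading the ordering
from left to right, to a linear set for each spider center and a transitive set for each
group, the groups being consecutive unions of parts of the partition induced by the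
components of the contracting graph. -/
structure ClutterAssoc (K : Tournament) (C : ClutterData K) (k : ℕ)
    (T : Tournament) (c lam : ℝ) (w : List Bool) where
  χ : SmoothStructure T c lam w
  ctrSlot : Fin C.l → Fin 2 → Fin w.length
  grpSlot : Fin C.l → Fin 3 → Fin w.length
  hctr : ∀ (i : Fin C.l) (b : Fin 2), i.val < k → w.get (ctrSlot i b) = false
  hgrp : ∀ (i : Fin C.l) (q : Fin 3), i.val < k → w.get (grpSlot i q) = true
  hpart : ∀ a b : {p : Fin C.l × Fin 3 // p.1.val < k},
    SamePart (fun x : {p : Fin C.l × Fin 3 // p.1.val < k} => clNodes C x.1) a b →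
    grpSlot a.1.1 a.1.2 = grpSlot b.1.1 b.1.2
  hconsec : ∀ p q r : Fin C.l × Fin 3, p.1.val < k → q.1.val < k → r.1.val < k →
    ∀ a ∈ clNodes C p, ∀ b ∈ clNodes C q, ∀ e ∈ clNodes C r,
    a < e → e < b → grpSlot p.1 p.2 = grpSlot q.1 q.2 → grpSlot r.1 r.2 = grpSlot p.1 p.2
  hdiff : ∀ (i j : Fin C.l) (b : Fin 2) (q : Fin 3), i.val < k → j.val < k →
    ctrSlot i b ≠ grpSlot j q
  hctrInj : ∀ (i j : Fin C.l) (b b' : Fin 2), i.val < k → j.val < k →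
    ctrSlot i b = ctrSlot j b' → i = j ∧ b = b'
  hsurj : ∀ s : Fin w.length,
    (∃ (i : Fin C.l) (b : Fin 2), i.val < k ∧ ctrSlot i b = s) ∨
    (∃ (i : Fin C.l) (q : Fin 3), i.val < k ∧ grpSlot i q = s)
  hord1 : ∀ (i j : Fin C.l) (b b' : Fin 2), i.val < k → j.val < k →
    ctrSlot i b < ctrSlot j b' → (C.sp i).centerVert b < (C.sp j).centerVert b'
  hord2 : ∀ (i j : Fin C.l) (b : Fin 2) (q : Fin 3), i.val < k → j.val < k →
    ctrSlot i b < grpSlot j q →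
    ∀ a ∈ clGrpVerts C k grpSlot (grpSlot j q), (C.sp i).centerVert b < a
  hord3 : ∀ (i j : Fin C.l) (b : Fin 2) (q : Fin 3), i.val < k → j.val < k →
    grpSlot j q < ctrSlot i b →
    ∃ a ∈ clGrpVerts C k grpSlot (grpSlot j q), a < (C.sp i).centerVert b
  hord4 : ∀ (i j : Fin C.l) (q q' : Fin 3), i.val < k → j.val < k →
    grpSlot i q ≠ grpSlot j q' → grpSlot i q < grpSlot j q' →
    ∃ a ∈ clGrpVerts C k grpSlot (grpSlot i q),
      ∀ b ∈ clGrpVerts C k grpSlot (grpSlot j q'), a < b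

/-! ### Regular galaxies and galaxy-associated structures -/

/-- A regular galaxy structure on `H` under the natural ordering: the stars `Q i`
(with centers `ctr i`) partition the vertex set, all backward arcs are within the stars,
and no center of a star lies between two leaves of another star. -/
structure RegGalaxyData (H : Tournament) where
  m : ℕ
  Q : Fin m → Finset (Fin H.n)
  ctr : Fin m → Fin H.n
  star : ∀ i, IsStar H (Q i) (ctr i)
  disj : ∀ i j, i ≠ j → Disjoint (Q i) (Q j)
  cover : ∀ v, ∃ i, v ∈ Q i
  bk : ∀ u v, H.Bedge u v → ∃ i, u ∈ Q i ∧ v ∈ Q i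
  noCtr : ∀ i j, i ≠ j → ∀ u ∈ Q i, u ≠ ctr i → ∀ w ∈ Q i, w ≠ ctr i →
    ¬ (u < ctr j ∧ ctr j < w)

/-- Given a group-slot assignment `gs` on the stars of (the first `k` stars of) a regular
galaxy, the set of leaves belonging to the group with slot `s`. -/
noncomputable def grpLeaves {H : Tournament} (D : RegGalaxyData H) (k : ℕ) {L : ℕ}
    (gs : Fin D.m → Fin L) (s : Fin L) : Finset (Fin H.n) :=
  Finset.univ.biUnion fun i : Fin D.m =>
    if i.val < k ∧ gs i = s then (D.Q i).erase (D.ctr i) else ∅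

/-- A smooth `(c,λ,w)`-structure of `T` which is galaxy-associated to the sub-galaxy of
`H` formed by its first `k` stars. -/
structure GalaxyAssoc (H : Tournament) (D : RegGalaxyData H) (k : ℕ)
    (T : Tournament) (c lam : ℝ) (w : List Bool) where
  χ : SmoothStructure T c lam w
  ctrSlot : Fin D.m → Fin w.length
  grpSlot : Fin D.m → Fin w.length
  hctr : ∀ i : Fin D.m, i.val < k → w.get (ctrSlot i) = false
  hgrp : ∀ i : Fin D.m, i.val < k → w.get (grpSlot i) = true
  hpart : ∀ a b : {i : Fin D.m // i.val < k},
    SamePart (fun x : {i : Fin D.m // i.val < k} => (D.Q x.1).erase (D.ctr x.1)) a b →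
    grpSlot a.1 = grpSlot b.1
  hconsec : ∀ i j i' : Fin D.m, i.val < k → j.val < k → i'.val < k →
    ∀ a ∈ (D.Q i).erase (D.ctr i), ∀ b ∈ (D.Q j).erase (D.ctr j),
    ∀ e ∈ (D.Q i').erase (D.ctr i'),
    a < e → e < b → grpSlot i = grpSlot j → grpSlot i' = grpSlot i
  hdiff : ∀ i j : Fin D.m, i.val < k → j.val < k → ctrSlot i ≠ grpSlot j
  hctrInj : ∀ i j : Fin D.m, i.val < k → j.val < k → ctrSlot i = ctrSlot j → i = j
  hsurj : ∀ s : Fin w.length,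
    (∃ i : Fin D.m, i.val < k ∧ ctrSlot i = s) ∨ (∃ i : Fin D.m, i.val < k ∧ grpSlot i = s)
  hord1 : ∀ i j : Fin D.m, i.val < k → j.val < k → ctrSlot i < ctrSlot j → D.ctr i < D.ctr j
  hord2 : ∀ i j : Fin D.m, i.val < k → j.val < k → ctrSlot i < grpSlot j →
    ∀ a ∈ grpLeaves D k grpSlot (grpSlot j), D.ctr i < a
  hord3 : ∀ i j : Fin D.m, i.val < k → j.val < k → grpSlot j < ctrSlot i →
    ∃ a ∈ grpLeaves D k grpSlot (grpSlot j), a < D.ctr i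
  hord4 : ∀ i j : Fin D.m, i.val < k → j.val < k → grpSlot i ≠ grpSlot j →
    grpSlot i < grpSlot j →
    ∃ a ∈ grpLeaves D k grpSlot (grpSlot i),
      ∀ b ∈ grpLeaves D k grpSlot (grpSlot j), a < b

/-! ### Galaxies with spiders -/

/-- The data of a super galaxy ordering (under the natural ordering of the vertices):
spiders `sp i`, stars `Q j` of the galaxy part, pairwise disjoint, with:
no center of a star between leaves of another star, no interior vertex of a spider
between leaves of a star, no center of a star between legs of a spider incident to the
same center, and the spiders ordered in consecutive blocks. -/
structure SGData (H : Tournament) where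
  l : ℕ
  sp : Fin l → SpiderAt H
  m : ℕ
  Q : Fin m → Finset (Fin H.n)
  qctr : Fin m → Fin H.n
  star : ∀ j, IsStar H (Q j) (qctr j)
  spDisj : ∀ i i' : Fin l, i ≠ i' → Disjoint (sp i).verts (sp i').verts
  qDisj : ∀ j j' : Fin m, j ≠ j' → Disjoint (Q j) (Q j')
  spqDisj : ∀ (i : Fin l) (j : Fin m), Disjoint (sp i).verts (Q j)
  noCtrBetween : ∀ j j' : Fin m, j ≠ j' → ∀ u ∈ Q j, u ≠ qctr j → ∀ w ∈ Q j, w ≠ qctr j →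
    ¬ (u < qctr j' ∧ qctr j' < w)
  noIntBetween : ∀ (i : Fin l) (j : Fin m) (v : Fin H.n), (sp i).isInterior v →
    ∀ u ∈ Q j, u ≠ qctr j → ∀ w ∈ Q j, w ≠ qctr j → ¬ (u < v ∧ v < w)
  noCtrBetweenLegs : ∀ (i : Fin l) (j : Fin m) (c : ℕ) (u w : Fin H.n),
    (sp i).legOf u c → (sp i).legOf w c → ¬ (u < qctr j ∧ qctr j < w)
  spOrdered : ∀ i i' : Fin l, i < i' → ∀ u ∈ (sp i).verts, ∀ v ∈ (sp i').verts, u < v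

/-- The nodes of the contracting graph associated to super galaxy data: the two leg sets
and the petal set of each spider, and the leaf set of each star. -/
noncomputable def sgNodes {H : Tournament} (D : SGData H) :
    (Fin D.l × Fin 3) ⊕ Fin D.m → Finset (Fin H.n)
  | Sum.inl p =>
      if p.2 = 0 then (D.sp p.1).legsTo (D.sp p.1).t
      else if p.2 = 1 then (D.sp p.1).petals
      else (D.sp p.1).legsTo ((D.sp p.1).t + 4)
  | Sum.inr j => (D.Q j).erase (D.qctr j)

/-- A galaxy with spiders, under the natural ordering: super galaxy data such that all
backward arcs lie within a spider or within a star, and legs of distinct spiders may lie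
in the same part of the induced partition only if no center of a star lies between a
center of the one spider and a center of the other. -/
def IsGWSUnderId (H : Tournament) : Prop :=
  ∃ D : SGData H,
    (∀ u v, H.Bedge u v →
      (∃ i, u ∈ (D.sp i).verts ∧ v ∈ (D.sp i).verts) ∨ (∃ j, u ∈ D.Q j ∧ v ∈ D.Q j)) ∧
    (∀ i i' : Fin D.l, i ≠ i' → ∀ (v v' : Fin H.n) (c c' : ℕ),
      (D.sp i).legOf v c → (D.sp i').legOf v' c' →
      SamePartV (sgNodes D) v v' →
      ¬ ∃ (j : Fin D.m) (a b : Fin H.n), (D.sp i).isCenter a ∧ (D.sp i').isCenter b ∧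
          ((a < D.qctr j ∧ D.qctr j < b) ∨ (b < D.qctr j ∧ D.qctr j < a)))

/-- `H` is a galaxy with spiders. -/
def IsGalaxyWithSpiders (H : Tournament) : Prop :=
  ∃ σ : Fin H.n ≃ Fin H.n, IsGWSUnderId (H.reorder σ)

/-- A tournament obtained by merging an asterism and a galaxy with spiders, under the
natural ordering of the vertices. -/
def IsMergedUnderId (H : Tournament) : Prop :=
  ∃ (la : ℕ) (A : Fin la → Fin 7 → Fin H.n) (D : SGData H),
    (∀ i, IsBetaAsteroid H (A i)) ∧
    (∀ i i' : Fin la, i ≠ i' → ∀ p q, A i p ≠ A i' q) ∧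
    (∀ (i : Fin la) (i' : Fin D.l) (p : Fin 7), A i p ∉ (D.sp i').verts) ∧
    (∀ (i : Fin la) (j : Fin D.m) (p : Fin 7), A i p ∉ D.Q j) ∧
    (∀ u v, H.Bedge u v →
      (∃ i, (∃ p, A i p = u) ∧ (∃ q, A i q = v)) ∨
      (∃ i, u ∈ (D.sp i).verts ∧ v ∈ (D.sp i).verts) ∨
      (∃ j, u ∈ D.Q j ∧ v ∈ D.Q j)) ∧
    (∀ (i : Fin la) (p : Fin 7) (j : Fin D.m), ∀ u ∈ D.Q j, u ≠ D.qctr j →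
      ∀ w ∈ D.Q j, w ≠ D.qctr j → ¬ (u < A i p ∧ A i p < w)) ∧
    (∀ (i : Fin la) (p : Fin 7) (i' : Fin D.l) (c : ℕ) (u w : Fin H.n),
      (D.sp i').legOf u c → (D.sp i').legOf w c → ¬ (u < A i p ∧ A i p < w)) ∧
    (∀ i i' : Fin D.l, i ≠ i' → ∀ (v v' : Fin H.n) (c c' : ℕ),
      (D.sp i).legOf v c → (D.sp i').legOf v' c' →
      SamePartV (sgNodes D) v v' →
      ¬ ∃ (j : Fin D.m) (a b : Fin H.n), (D.sp i).isCenter a ∧ (D.sp i').isCenter b ∧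
          ((a < D.qctr j ∧ D.qctr j < b) ∨ (b < D.qctr j ∧ D.qctr j < a))) ∧
    (∀ i i' : Fin D.l, i ≠ i' → ∀ (v v' : Fin H.n) (c c' : ℕ),
      (D.sp i).legOf v c → (D.sp i').legOf v' c' →
      SamePartV (sgNodes D) v v' →
      ¬ ∃ (ia : Fin la) (p : Fin 7) (a b : Fin H.n),
          (D.sp i).isCenter a ∧ (D.sp i').isCenter b ∧
          ((a < A ia p ∧ A ia p < b) ∨ (b < A ia p ∧ A ia p < a)))

/-- `H` is obtained by merging an asterism and a galaxy with spiders. -/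
def IsMergedAsterismGWS (H : Tournament) : Prop :=
  ∃ σ : Fin H.n ≃ Fin H.n, IsMergedUnderId (H.reorder σ)

/-! ### Mutant β-asteroids -/

/-- The `{0,1}`-vector (as a list of booleans) corresponding to a mutant left β-asteroid. -/
def wLeftM : List Bool := [false, false, true, false, true, false, false, true, false]
/-- The `{0,1}`-vector corresponding to a mutant right β-asteroid. -/
def wRightM : List Bool := [false, true, false, false, true, false, true, false, false]

/-- Backward arcs of the mutant left β1-asteroid (0-based indices). -/
def mlb1Bk : List (Fin 13 × Fin 13) := [(4,1),(6,3),(8,0),(9,5),(10,2),(11,3),(12,7),(12,9)]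
/-- Non-adjacent pairs of the mutant left β1-asteroid. -/
def mlb1Na : List (Fin 13 × Fin 13) := [(5,12),(6,11),(7,9)]
/-- Backward arcs of the mutant left β2-asteroid. -/
def mlb2Bk : List (Fin 13 × Fin 13) := [(4,1),(6,3),(8,0),(9,5),(10,7),(10,9),(11,3),(12,2)]
/-- Non-adjacent pairs of the mutant left β2-asteroid. -/
def mlb2Na : List (Fin 13 × Fin 13) := [(5,10),(6,11),(7,9)]
/-- Backward arcs of the mutant right β1-asteroid. -/
def mrb1Bk : List (Fin 13 × Fin 13) := [(3,0),(5,0),(7,3),(9,1),(9,6),(10,2),(11,8),(12,4)]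
/-- Non-adjacent pairs of the mutant right β1-asteroid. -/
def mrb1Na : List (Fin 13 × Fin 13) := [(0,7),(1,6),(3,5)]
/-- Backward arcs of the mutant right β2-asteroid. -/
def mrb2Bk : List (Fin 13 × Fin 13) := [(3,2),(5,2),(7,3),(9,1),(9,6),(10,0),(11,8),(12,4)]
/-- Non-adjacent pairs of the mutant right β2-asteroid. -/
def mrb2Na : List (Fin 13 × Fin 13) := [(1,6),(2,7),(3,5)]

/-- The four mutant β-asteroids, each given by its backward arcs, its non-adjacent pairs
and its corresponding `{0,1}`-vector. -/
def mutantVariants :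
    List (List (Fin 13 × Fin 13) × List (Fin 13 × Fin 13) × List Bool) :=
  [(mlb1Bk, mlb1Na, wLeftM), (mlb2Bk, mlb2Na, wLeftM),
   (mrb1Bk, mrb1Na, wRightM), (mrb2Bk, mrb2Na, wRightM)]

/-- The adjacency of a mutant β-asteroid with backward arcs `bk` and non-adjacent
pairs `na`: all pairs other than those of `na` and `bk` are forward. -/
def mutAdj (bk na : List (Fin 13 × Fin 13)) (p q : Fin 13) : Prop :=
  (p, q) ∈ bk ∨ (p < q ∧ (p, q) ∉ na ∧ (q, p) ∉ bk)

/-- The position group of each vertex of a mutant β-asteroid: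
`{a₁},{a₂},{a₃},{a₄},{a₅,…,a₉},{a₁₀},{a₁₁},{a₁₂},{a₁₃}`. -/
def mGrp (p : Fin 13) : Fin 9 :=
  if h : p.val ≤ 3 then ⟨p.val, by omega⟩
  else if h2 : p.val ≤ 8 then ⟨4, by omega⟩
  else ⟨p.val - 4, by have := p.isLt; omega⟩

lemma trSet_attained (T : Tournament) (X : Finset (Fin T.n)) :
    ∃ A, A ⊆ X ∧ T.IsTransSet A ∧ A.card = T.trSet X := by
  have hne : ({k | ∃ Y ⊆ X, T.IsTransSet Y ∧ Y.card = k} : Set ℕ).Nonempty :=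
    ⟨0, ∅, Finset.empty_subset _, (by intro u hu; simp at hu), Finset.card_empty⟩
  have hbdd : BddAbove ({k | ∃ Y ⊆ X, T.IsTransSet Y ∧ Y.card = k} : Set ℕ) := by
    refine ⟨X.card, fun k hk => ?_⟩
    obtain ⟨Z, hZ, _, rfl⟩ := hk
    exact Finset.card_le_card hZ
  obtain ⟨A, hA, hAt, hAc⟩ := Nat.sSup_mem hne hbdd
  exact ⟨A, hA, hAt, hAc⟩

lemma card_le_tr (T : Tournament) (A : Finset (Fin T.n)) (hA : T.IsTransSet A) :
    A.card ≤ T.tr := by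
  have hbdd : BddAbove ({k | ∃ Y ⊆ Finset.univ, T.IsTransSet Y ∧ Y.card = k} : Set ℕ) := by
    refine ⟨(Finset.univ : Finset (Fin T.n)).card, fun k hk => ?_⟩
    obtain ⟨Z, hZ, _, rfl⟩ := hk
    exact Finset.card_le_card hZ
  exact le_csSup hbdd ⟨A, Finset.subset_univ _, hA, rfl⟩

lemma trans_union (T : Tournament) (A B : Finset (Fin T.n))
    (hA : T.IsTransSet A) (hB : T.IsTransSet B)
    (hAB : ∀ a ∈ A, ∀ b ∈ B, T.adj a b) : T.IsTransSet (A ∪ B) := by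
  intro u hu v hv w hw huv hvw
  simp only [Finset.mem_union] at hu hv hw
  rcases hu with hu | hu <;> rcases hw with hw | hw
  · rcases hv with hv | hv
    · exact hA u hu v hv w hw huv hvw
    · exact absurd (hAB w hw v hv) (T.asymm v w hvw)
  · exact hAB u hu w hw
  · rcases hv with hv | hv
    · exact absurd (hAB v hv u hu) (T.asymm u v huv)
    · exact absurd (hAB w hw v hv) (T.asymm v w hvw)
  · rcases hv with hv | hv
    · exact absurd (hAB v hv u hu) (T.asymm u v huv)
    · exact hB u hu v hv w hw huv hvw

/-! Statement 1 -/
theorem many_backward_pairs (T : Tournament) (n : ℕ) (hn : T.n = n) (ε c : ℝ)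
    (hε : 0 < ε) (hc : 0 < c) (hc1 : c ≤ 1)
    (hεlog : ε < Real.logb (c / 2) (1 / 2))
    (hcrit : T.EpsCritical ε)
    (X Y : Finset (Fin T.n)) (hXY : Disjoint X Y)
    (hX : c * n ≤ (X.card : ℝ)) (hY : c * n ≤ (Y.card : ℝ)) :
    ∃ k : ℕ, c * n / 2 ≤ (k : ℝ) ∧
      ∃ (x : Fin k → Fin T.n) (y : Fin k → Fin T.n),
        Function.Injective x ∧ Function.Injective y ∧
        (∀ i, x i ∈ X) ∧ (∀ i, y i ∈ Y) ∧ ∀ i, T.adj (y i) (x i) := by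
  subst hn
  set K : Set ℕ := {k | ∃ x : Fin k → Fin T.n, ∃ y : Fin k → Fin T.n,
    Function.Injective x ∧ Function.Injective y ∧
    (∀ i, x i ∈ X) ∧ (∀ i, y i ∈ Y) ∧ ∀ i, T.adj (y i) (x i)} with hKdef
  have h0 : (0 : ℕ) ∈ K :=
    ⟨Fin.elim0, Fin.elim0, fun a => a.elim0, fun a => a.elim0,
      fun a => a.elim0, fun a => a.elim0, fun a => a.elim0⟩
  have hbdd : BddAbove K := by
    refine ⟨T.n, fun k hk => ?_⟩
    obtain ⟨x, y, hxinj, -, -, -, -⟩ := hk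
    simpa using Fintype.card_le_of_injective x hxinj
  set k := sSup K with hkdef
  have hkK : k ∈ K := Nat.sSup_mem ⟨0, h0⟩ hbdd
  refine ⟨k, ?_, hkK⟩
  by_contra hlt
  push_neg at hlt
  obtain ⟨x, y, hxinj, hyinj, hxX, hyY, hadj⟩ := hkK
  have hk0 : (0 : ℝ) ≤ (k : ℝ) := Nat.cast_nonneg k
  have hcn : 0 < c * (T.n : ℝ) := by linarith
  have hnpos : 0 < (T.n : ℝ) := by nlinarith
  set X' : Finset (Fin T.n) := X \ Finset.image x Finset.univ with hX'def
  set Y' : Finset (Fin T.n) := Y \ Finset.image y Finset.univ with hY'def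
  have hX'sub : X' ⊆ X := Finset.sdiff_subset
  have hY'sub : Y' ⊆ Y := Finset.sdiff_subset
  have hximg : (Finset.image x Finset.univ).card ≤ k := by
    simpa using Finset.card_image_le (f := x) (s := (Finset.univ : Finset (Fin k)))
  have hyimg : (Finset.image y Finset.univ).card ≤ k := by
    simpa using Finset.card_image_le (f := y) (s := (Finset.univ : Finset (Fin k)))
  have hX'card : (X.card : ℝ) - k ≤ (X'.card : ℝ) := by
    have h1 := Finset.card_le_card_sdiff_add_card (s := X) (t := Finset.image x Finset.univ)
    have h2 : X.card ≤ X'.card + k := by rw [hX'def]; omega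
    have := (Nat.cast_le (α := ℝ)).mpr h2
    push_cast at this
    linarith
  have hY'card : (Y.card : ℝ) - k ≤ (Y'.card : ℝ) := by
    have h1 := Finset.card_le_card_sdiff_add_card (s := Y) (t := Finset.image y Finset.univ)
    have h2 : Y.card ≤ Y'.card + k := by rw [hY'def]; omega
    have := (Nat.cast_le (α := ℝ)).mpr h2
    push_cast at this
    linarith
  have hX'big : c * (T.n : ℝ) / 2 < (X'.card : ℝ) := by linarith
  have hY'big : c * (T.n : ℝ) / 2 < (Y'.card : ℝ) := by linarith
  by_cases hex : ∃ x0 ∈ X', ∃ y0 ∈ Y', T.adj y0 x0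
  · -- we can extend the matching, contradicting maximality
    obtain ⟨x0, hx0, y0, hy0, hadj0⟩ := hex
    have hx0nr : ∀ i, x i ≠ x0 := by
      intro i h
      exact (Finset.mem_sdiff.mp hx0).2 (Finset.mem_image.mpr ⟨i, Finset.mem_univ i, h⟩)
    have hy0nr : ∀ i, y i ≠ y0 := by
      intro i h
      exact (Finset.mem_sdiff.mp hy0).2 (Finset.mem_image.mpr ⟨i, Finset.mem_univ i, h⟩)
    have hsucc : k + 1 ∈ K := by
      refine ⟨Fin.snoc x x0, Fin.snoc y y0, ?_, ?_, ?_, ?_, ?_⟩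
      · intro a b hab
        rcases Fin.eq_castSucc_or_eq_last a with ⟨a', rfl⟩ | rfl <;>
          rcases Fin.eq_castSucc_or_eq_last b with ⟨b', rfl⟩ | rfl
        · simp only [Fin.snoc_castSucc] at hab
          exact congrArg _ (hxinj hab)
        · simp only [Fin.snoc_castSucc, Fin.snoc_last] at hab
          exact absurd hab (hx0nr a')
        · simp only [Fin.snoc_castSucc, Fin.snoc_last] at hab
          exact absurd hab.symm (hx0nr b')
        · rfl
      · intro a b hab
        rcases Fin.eq_castSucc_or_eq_last a with ⟨a', rfl⟩ | rfl <;>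
          rcases Fin.eq_castSucc_or_eq_last b with ⟨b', rfl⟩ | rfl
        · simp only [Fin.snoc_castSucc] at hab
          exact congrArg _ (hyinj hab)
        · simp only [Fin.snoc_castSucc, Fin.snoc_last] at hab
          exact absurd hab (hy0nr a')
        · simp only [Fin.snoc_castSucc, Fin.snoc_last] at hab
          exact absurd hab.symm (hy0nr b')
        · rfl
      · intro i
        rcases Fin.eq_castSucc_or_eq_last i with ⟨i', rfl⟩ | rfl
        · simpa using hxX i'
        · simpa using hX'sub hx0
      · intro i
        rcases Fin.eq_castSucc_or_eq_last i with ⟨i', rfl⟩ | rfl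
        · simpa using hyY i'
        · simpa using hY'sub hy0
      · intro i
        rcases Fin.eq_castSucc_or_eq_last i with ⟨i', rfl⟩ | rfl
        · simpa using hadj i'
        · simpa using hadj0
    have : k + 1 ≤ k := hkdef ▸ le_csSup hbdd hsucc
    omega
  · -- no backward arc between X' and Y': X' is complete to Y'
    push_neg at hex
    have hcomp : ∀ a ∈ X', ∀ b ∈ Y', T.adj a b := by
      intro a ha b hb
      have hne : a ≠ b := by
        intro h; subst h
        exact Finset.disjoint_left.mp hXY (hX'sub ha) (hY'sub hb)
      rcases T.total a b hne with h | h
      · exact h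
      · exact absurd h (hex a ha b hb)
    have hX'pos : (0 : ℝ) < (X'.card : ℝ) := by linarith
    have hY'pos : (0 : ℝ) < (Y'.card : ℝ) := by linarith
    have hX'ne : X'.Nonempty := Finset.card_pos.mp (by exact_mod_cast hX'pos)
    have hY'ne : Y'.Nonempty := Finset.card_pos.mp (by exact_mod_cast hY'pos)
    have hX'nuniv : X' ≠ Finset.univ := by
      obtain ⟨y0, hy0⟩ := hY'ne
      intro h
      exact Finset.disjoint_left.mp hXY (hX'sub (h ▸ Finset.mem_univ y0)) (hY'sub hy0)
    have hY'nuniv : Y' ≠ Finset.univ := by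
      obtain ⟨x0, hx0⟩ := hX'ne
      intro h
      exact Finset.disjoint_left.mp hXY (hX'sub hx0) (hY'sub (h ▸ Finset.mem_univ x0))
    have hcX := hcrit.2 X' hX'nuniv
    have hcY := hcrit.2 Y' hY'nuniv
    obtain ⟨A, hAX, hAt, hAc⟩ := trSet_attained T X'
    obtain ⟨B, hBY, hBt, hBc⟩ := trSet_attained T Y'
    have hUt : T.IsTransSet (A ∪ B) :=
      trans_union T A B hAt hBt (fun a ha b hb => hcomp a (hAX ha) b (hBY hb))
    have hABdisj : Disjoint A B :=
      hXY.mono (hAX.trans hX'sub) (hBY.trans hY'sub)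
    have hcard : (A ∪ B).card = A.card + B.card := Finset.card_union_of_disjoint hABdisj
    have htr : A.card + B.card ≤ T.tr := hcard ▸ card_le_tr T _ hUt
    have hA1 : ((X'.card : ℝ)) ^ ε ≤ (A.card : ℝ) := by
      rw [hAc]; exact hcX
    have hB1 : ((Y'.card : ℝ)) ^ ε ≤ (B.card : ℝ) := by
      rw [hBc]; exact hcY
    have hhalf : 0 < c * (T.n : ℝ) / 2 := by linarith
    have e1 : (c * (T.n : ℝ) / 2) ^ ε ≤ ((X'.card : ℝ)) ^ ε :=
      Real.rpow_le_rpow hhalf.le hX'big.le hε.le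
    have e2 : (c * (T.n : ℝ) / 2) ^ ε ≤ ((Y'.card : ℝ)) ^ ε :=
      Real.rpow_le_rpow hhalf.le hY'big.le hε.le
    have e4 : (c * (T.n : ℝ) / 2) ^ ε = (c / 2) ^ ε * (T.n : ℝ) ^ ε := by
      rw [show c * (T.n : ℝ) / 2 = (c / 2) * (T.n : ℝ) by ring]
      exact Real.mul_rpow (by linarith) hnpos.le
    have hb0 : (0 : ℝ) < c / 2 := by linarith
    have hb1 : c / 2 < 1 := by linarith
    have hkey : (1 : ℝ) / 2 < (c / 2) ^ ε := by
      have h := Real.rpow_lt_rpow_of_exponent_gt hb0 hb1 hεlog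
      rwa [Real.rpow_logb hb0 (ne_of_lt hb1) (by norm_num : (0 : ℝ) < 1 / 2)] at h
    have hnε : (0 : ℝ) < (T.n : ℝ) ^ ε := Real.rpow_pos_of_pos hnpos ε
    have htrℝ : ((A.card : ℝ)) + (B.card : ℝ) ≤ (T.tr : ℝ) := by
      have := (Nat.cast_le (α := ℝ)).mpr htr
      push_cast at this
      linarith
    have hkey2 : (T.n : ℝ) ^ ε < 2 * ((c / 2) ^ ε * (T.n : ℝ) ^ ε) := by nlinarith
    have := hcrit.1
    linarith
end

section
/- Let T be an ε-critical tournament with |T| = n, and let ε, c, f > 0 be constants with 0 < c, f < 1 and ε < log_c(1 − f). Then for every A ⊆ V(T) with |A| ≥ cn and every transitive subtournament G of T with |G| ≥ f·tr(T) and V(G) ∩ A = ∅: A is not complete from V(G) and A is not complete to V(G). -/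
open scoped Classical

namespace Tournament

lemma trSet_bdd (T : Tournament) (X : Finset (Fin T.n)) :
    BddAbove {k | ∃ Y ⊆ X, T.IsTransSet Y ∧ Y.card = k} := by
  refine ⟨X.card, ?_⟩
  rintro k ⟨Y, hYX, -, rfl⟩
  exact Finset.card_le_card hYX

lemma le_trSet (T : Tournament) {X Y : Finset (Fin T.n)} (hYX : Y ⊆ X)
    (hY : T.IsTransSet Y) : Y.card ≤ T.trSet X :=
  le_csSup (T.trSet_bdd X) ⟨Y, hYX, hY, rfl⟩

lemma exists_trSet_witness (T : Tournament) (X : Finset (Fin T.n)) :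
    ∃ Y ⊆ X, T.IsTransSet Y ∧ Y.card = T.trSet X := by
  have hne : {k | ∃ Y ⊆ X, T.IsTransSet Y ∧ Y.card = k}.Nonempty :=
    ⟨0, ∅, Finset.empty_subset _, fun u hu => absurd hu (Finset.notMem_empty u), rfl⟩
  exact Nat.sSup_mem hne (T.trSet_bdd X)

end Tournament

/-! Statement 2 -/
theorem large_set_not_complete_to_transitive (T : Tournament) (n : ℕ) (hn : T.n = n)
    (ε c f : ℝ) (hε : 0 < ε) (hc : 0 < c) (hc1 : c < 1) (hf : 0 < f) (hf1 : f < 1)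
    (hεlog : ε < Real.logb c (1 - f))
    (hcrit : T.EpsCritical ε)
    (A : Finset (Fin T.n)) (hA : c * n ≤ (A.card : ℝ))
    (G : Finset (Fin T.n)) (hGtrans : T.IsTransSet G)
    (hG : f * T.tr ≤ (G.card : ℝ)) (hdisj : Disjoint G A) :
    (¬ ∀ g ∈ G, ∀ a ∈ A, T.adj g a) ∧ (¬ ∀ a ∈ A, ∀ g ∈ G, T.adj a g) := by
  subst hn
  obtain ⟨hlt, hsub⟩ := hcrit
  -- n ≥ 1
  have hn1 : 1 ≤ T.n := by
    by_contra h
    have h0 : T.n = 0 := by omega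
    rw [h0] at hlt
    have : ((0 : ℕ) : ℝ) ^ ε = 0 := by
      simp [Real.zero_rpow hε.ne']
    rw [this] at hlt
    have : (0 : ℝ) ≤ (T.tr : ℝ) := Nat.cast_nonneg _
    linarith
  -- tr ≥ 1
  have htr1 : 1 ≤ T.tr := by
    have hsingle : T.IsTransSet {(⟨0, hn1⟩ : Fin T.n)} := by
      intro u hu v hv w hw h1 h2
      simp only [Finset.mem_singleton] at hu hv
      rw [hu, hv] at h1
      exact absurd h1 (T.irrefl _)
    have := T.le_trSet (Finset.subset_univ {(⟨0, hn1⟩ : Fin T.n)}) hsingle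
    simpa [Tournament.tr] using this
  have htrpos : (0 : ℝ) < (T.tr : ℝ) := by exact_mod_cast htr1
  -- G nonempty
  have hGpos : 0 < G.card := by
    by_contra h
    have : G.card = 0 := by omega
    rw [this] at hG
    have : 0 < f * (T.tr : ℝ) := mul_pos hf htrpos
    push_cast at hG
    linarith
  obtain ⟨g, hg⟩ := Finset.card_pos.mp hGpos
  have hgA : g ∉ A := Finset.disjoint_left.mp hdisj hg
  have hAne : A ≠ Finset.univ := by
    intro h
    exact hgA (h ▸ Finset.mem_univ g)
  have hAcrit : ((A.card : ℝ)) ^ ε ≤ (T.trSet A : ℝ) := hsub A hAne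
  obtain ⟨Y, hYA, hYt, hYcard⟩ := T.exists_trSet_witness A
  -- the key numeric contradiction
  have key : T.IsTransSet (G ∪ Y) → False := by
    intro hUnion
    have hdisjGY : Disjoint G Y := hdisj.mono_right hYA
    have hcard : G.card + Y.card ≤ T.tr := by
      have h := T.le_trSet (Finset.subset_univ (G ∪ Y)) hUnion
      rwa [Finset.card_union_of_disjoint hdisjGY] at h
    have hcn0 : (0 : ℝ) ≤ c * (T.n : ℝ) := by positivity
    have h1 : (c * (T.n : ℝ)) ^ ε ≤ ((A.card : ℝ)) ^ ε :=
      Real.rpow_le_rpow hcn0 hA hε.le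
    have h2 : (c * (T.n : ℝ)) ^ ε ≤ (Y.card : ℝ) := by
      rw [hYcard]; push_cast; linarith
    have h3 : f * (T.tr : ℝ) + (c * (T.n : ℝ)) ^ ε ≤ (T.tr : ℝ) := by
      have : ((G.card : ℝ)) + (Y.card : ℝ) ≤ (T.tr : ℝ) := by exact_mod_cast hcard
      linarith
    have hmul : (c * (T.n : ℝ)) ^ ε = c ^ ε * ((T.n : ℝ)) ^ ε :=
      Real.mul_rpow hc.le (Nat.cast_nonneg _)
    have hcε : (0 : ℝ) < c ^ ε := Real.rpow_pos_of_pos hc ε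
    have h4 : c ^ ε * (T.tr : ℝ) < c ^ ε * ((T.n : ℝ)) ^ ε :=
      mul_lt_mul_of_pos_left hlt hcε
    have h5 : c ^ ε < 1 - f := by nlinarith
    have hlogc : Real.log c < 0 := Real.log_neg hc hc1
    have hf' : (0 : ℝ) < 1 - f := by linarith
    have h6 : Real.log (1 - f) < ε * Real.log c := by
      rw [Real.logb, lt_div_iff_of_neg hlogc] at hεlog
      linarith
    have h7 : 1 - f < c ^ ε := by
      rw [Real.rpow_def_of_pos hc, ← Real.exp_log hf']
      exact Real.exp_lt_exp.mpr (by linarith)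
    linarith
  constructor
  · intro hcomp
    apply key
    intro u hu v hv w hw h1 h2
    rw [Finset.mem_union] at hu hv hw
    rcases hu with hu | hu <;> rcases hv with hv | hv <;> rcases hw with hw | hw
    · exact hGtrans u hu v hv w hw h1 h2
    · exact hcomp u hu w (hYA hw)
    · exact absurd h2 (T.asymm w v (hcomp w hw v (hYA hv)))
    · exact hcomp u hu w (hYA hw)
    · exact absurd h1 (T.asymm v u (hcomp v hv u (hYA hu)))
    · exact absurd h1 (T.asymm v u (hcomp v hv u (hYA hu)))
    · exact absurd h2 (T.asymm w v (hcomp w hw v (hYA hv)))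
    · exact hYt u hu v hv w hw h1 h2
  · intro hcomp
    apply key
    intro u hu v hv w hw h1 h2
    rw [Finset.mem_union] at hu hv hw
    rcases hu with hu | hu <;> rcases hv with hv | hv <;> rcases hw with hw | hw
    · exact hGtrans u hu v hv w hw h1 h2
    · exact absurd h2 (T.asymm w v (hcomp w (hYA hw) v hv))
    · exact absurd h1 (T.asymm v u (hcomp v (hYA hv) u hu))
    · exact absurd h1 (T.asymm v u (hcomp v (hYA hv) u hu))
    · exact hcomp u (hYA hu) w hw
    · exact absurd h2 (T.asymm w v (hcomp w (hYA hw) v hv))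
    · exact hcomp u (hYA hu) w hw
    · exact hYt u hu v hv w hw h1 h2
end

section
/- Let f, c, ε > 0 be constants with 0 < f, c < 1 and 0 < ε < min{log_{c/2}(1 − f), log_{c/4}(1/2)}. Let T be an ε-critical tournament with |T| = n, let S_1, S_2 be two disjoint transitive subtournaments of T with |S_1| ≥ f·tr(T) and |S_2| ≥ f·tr(T), and let A_1, A_2 be two disjoint subsets of V(T) \ (V(S_1) ∪ V(S_2)) with |A_1| ≥ cn and |A_2| ≥ cn. Then: (1) there exist vertices a ∈ A_1, x ∈ A_2, s_1 ∈ S_1, s_2 ∈ S_2 such that (x,a), (x,s_2) and (a,s_1) are arcs of T; and (2) there exist vertices d_1 ∈ A_1, d_2 ∈ A_2, u_1 ∈ S_1, u_2 ∈ S_2 such that (u_1,d_1), (d_2,d_1) and (u_2,d_2) are arcs of T. -/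
open scoped Classical

namespace TournamentAux

lemma trSet_bdd (T : Tournament) (X : Finset (Fin T.n)) :
    BddAbove {k | ∃ Y ⊆ X, T.IsTransSet Y ∧ Y.card = k} :=
  ⟨X.card, by rintro k ⟨Y, hY, -, rfl⟩; exact Finset.card_le_card hY⟩

lemma trSet_spec (T : Tournament) (X : Finset (Fin T.n)) :
    ∃ Y ⊆ X, T.IsTransSet Y ∧ Y.card = T.trSet X := by
  have h0 : (0:ℕ) ∈ {k | ∃ Y ⊆ X, T.IsTransSet Y ∧ Y.card = k} :=
    ⟨∅, Finset.empty_subset X, fun u hu => absurd hu (Finset.notMem_empty u),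
      Finset.card_empty⟩
  exact Nat.sSup_mem ⟨0, h0⟩ (trSet_bdd T X)

lemma le_trSet (T : Tournament) {X Y : Finset (Fin T.n)} (hYX : Y ⊆ X)
    (hY : T.IsTransSet Y) : Y.card ≤ T.trSet X :=
  le_csSup (trSet_bdd T X) ⟨Y, hYX, hY, rfl⟩

lemma contra_of_two (T : Tournament) {W₁ W₂ : Finset (Fin T.n)} (h1 : T.IsTransSet W₁)
    (h2 : T.IsTransSet W₂) (hd : Disjoint W₁ W₂)
    (harc : ∀ x ∈ W₁, ∀ y ∈ W₂, T.adj x y)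
    (hcard : (T.tr : ℝ) < (W₁.card : ℝ) + (W₂.card : ℝ)) : False := by
  have hun : T.IsTransSet (W₁ ∪ W₂) := by
    intro u hu v hv w hw huv hvw
    rcases Finset.mem_union.1 hu with hu | hu <;>
    rcases Finset.mem_union.1 hv with hv | hv <;>
    rcases Finset.mem_union.1 hw with hw | hw
    · exact h1 u hu v hv w hw huv hvw
    · exact harc u hu w hw
    · exact absurd hvw (T.asymm w v (harc w hw v hv))
    · exact harc u hu w hw
    · exact absurd huv (T.asymm v u (harc v hv u hu))
    · exact absurd huv (T.asymm v u (harc v hv u hu))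
    · exact absurd hvw (T.asymm w v (harc w hw v hv))
    · exact h2 u hu v hv w hw huv hvw
  have hle : W₁.card + W₂.card ≤ T.tr := by
    have h := le_trSet T (Finset.subset_univ (W₁ ∪ W₂)) hun
    rwa [Finset.card_union_of_disjoint hd] at h
  have h' : ((W₁.card + W₂.card : ℕ) : ℝ) ≤ (T.tr : ℝ) := Nat.cast_le.2 hle
  push_cast at h'
  linarith

lemma critical_lb (T : Tournament) {ε : ℝ} (hε0 : 0 < ε) (hcrit : T.EpsCritical ε)
    {X : Finset (Fin T.n)} (hX : X ≠ Finset.univ) {γ : ℝ} (hγ0 : 0 < γ)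
    (hγX : γ * T.n ≤ (X.card : ℝ)) :
    γ ^ ε * (T.tr : ℝ) < (T.trSet X : ℝ) := by
  have h1 : ((X.card : ℝ)) ^ ε ≤ (T.trSet X : ℝ) := hcrit.2 X hX
  have h2 : (γ * T.n) ^ ε ≤ ((X.card : ℝ)) ^ ε :=
    Real.rpow_le_rpow (by positivity) hγX hε0.le
  have h3 : (γ * (T.n:ℝ)) ^ ε = γ ^ ε * ((T.n : ℝ)) ^ ε :=
    Real.mul_rpow hγ0.le (Nat.cast_nonneg _)
  have h4 : γ ^ ε * (T.tr : ℝ) < γ ^ ε * ((T.n : ℝ)) ^ ε :=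
    mul_lt_mul_of_pos_left hcrit.1 (Real.rpow_pos_of_pos hγ0 ε)
  rw [h3] at h2
  linarith

lemma no_big_dominated (T : Tournament) {ε f c : ℝ} (hε0 : 0 < ε)
    (hcrit : T.EpsCritical ε) (h1f : 1 - f < (c/2) ^ ε) (hc : 0 < c)
    {S B : Finset (Fin T.n)} (hStr : T.IsTransSet S)
    (hScard : f * (T.tr : ℝ) ≤ (S.card : ℝ)) (hSne : S.Nonempty)
    (hBS : Disjoint B S) (hBcard : c/2 * (T.n : ℝ) ≤ (B.card : ℝ))
    (harc : (∀ b ∈ B, ∀ s ∈ S, T.adj s b) ∨ (∀ b ∈ B, ∀ s ∈ S, T.adj b s)) : False := by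
  have hBu : B ≠ Finset.univ := by
    intro h
    obtain ⟨s, hs⟩ := hSne
    exact (Finset.disjoint_left.1 hBS (h ▸ Finset.mem_univ s)) hs
  have hlb := critical_lb T hε0 hcrit hBu (by linarith : (0:ℝ) < c/2) hBcard
  obtain ⟨W, hWB, hWtr, hWcard⟩ := trSet_spec T B
  have htr0 : (0:ℝ) ≤ (T.tr : ℝ) := Nat.cast_nonneg _
  have e1 : (1 - f) * (T.tr : ℝ) ≤ (c/2) ^ ε * (T.tr : ℝ) :=
    mul_le_mul_of_nonneg_right h1f.le htr0
  have hW : (1 - f) * (T.tr : ℝ) < (W.card : ℝ) := by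
    rw [hWcard]; linarith
  have hdisj : Disjoint S W := (hBS.symm).mono_right hWB
  rcases harc with h | h
  · exact contra_of_two T hStr hWtr hdisj (fun s hs b hb => h b (hWB hb) s hs)
      (by linarith)
  · exact contra_of_two T hWtr hStr hdisj.symm (fun b hb s hs => h b (hWB hb) s hs)
      (by linarith)

lemma no_big_pair (T : Tournament) {ε c : ℝ} (hε0 : 0 < ε) (hcrit : T.EpsCritical ε)
    (h12 : (1:ℝ)/2 < (c/2) ^ ε) (hc : 0 < c)
    {B₁ B₂ : Finset (Fin T.n)} (hd : Disjoint B₁ B₂)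
    (h1u : B₁ ≠ Finset.univ) (h2u : B₂ ≠ Finset.univ)
    (h1c : c/2 * (T.n:ℝ) ≤ (B₁.card:ℝ)) (h2c : c/2 * (T.n:ℝ) ≤ (B₂.card:ℝ))
    (harc : ∀ b₁ ∈ B₁, ∀ b₂ ∈ B₂, T.adj b₁ b₂) : False := by
  have htr0 : (0:ℝ) ≤ (T.tr:ℝ) := Nat.cast_nonneg _
  have hlb1 := critical_lb T hε0 hcrit h1u (by linarith : (0:ℝ) < c/2) h1c
  have hlb2 := critical_lb T hε0 hcrit h2u (by linarith : (0:ℝ) < c/2) h2c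
  obtain ⟨W₁, hW₁B, hW₁tr, hW₁card⟩ := trSet_spec T B₁
  obtain ⟨W₂, hW₂B, hW₂tr, hW₂card⟩ := trSet_spec T B₂
  have e1 : (1:ℝ)/2 * (T.tr:ℝ) ≤ (c/2)^ε * (T.tr:ℝ) :=
    mul_le_mul_of_nonneg_right h12.le htr0
  have hW1 : (1:ℝ)/2 * (T.tr:ℝ) < (W₁.card:ℝ) := by rw [hW₁card]; linarith
  have hW2 : (1:ℝ)/2 * (T.tr:ℝ) < (W₂.card:ℝ) := by rw [hW₂card]; linarith
  exact contra_of_two T hW₁tr hW₂tr (hd.mono hW₁B hW₂B)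
    (fun x hx y hy => harc x (hW₁B hx) y (hW₂B hy)) (by linarith)

lemma filter_bound (T : Tournament) {ε f c : ℝ} (hε0 : 0 < ε)
    (hcrit : T.EpsCritical ε) (h1f : 1 - f < (c/2) ^ ε) (hc : 0 < c)
    (A S : Finset (Fin T.n)) (P : Fin T.n → Prop) [DecidablePred P]
    (hAS : Disjoint A S) (hStr : T.IsTransSet S)
    (hScard : f * (T.tr:ℝ) ≤ (S.card:ℝ)) (hSne : S.Nonempty)
    (hAc : c * (T.n:ℝ) ≤ (A.card : ℝ))
    (harc : (∀ a ∈ A, ¬ P a → ∀ s ∈ S, T.adj s a) ∨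
      (∀ a ∈ A, ¬ P a → ∀ s ∈ S, T.adj a s)) :
    c/2 * (T.n:ℝ) ≤ ((A.filter P).card : ℝ) := by
  by_contra hcon
  push_neg at hcon
  have hsplit : (A.filter P).card + (A.filter (fun a => ¬ P a)).card = A.card :=
    Finset.card_filter_add_card_filter_not (p := P)
  have hC : c/2 * (T.n:ℝ) ≤ ((A.filter fun a => ¬ P a).card : ℝ) := by
    have hcast : ((A.filter P).card : ℝ) + ((A.filter fun a => ¬ P a).card : ℝ)
        = (A.card : ℝ) := by exact_mod_cast hsplit
    linarith
  have hCS : Disjoint (A.filter fun a => ¬ P a) S :=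
    hAS.mono_left (Finset.filter_subset _ _)
  refine no_big_dominated T hε0 hcrit h1f hc hStr hScard hSne hCS hC ?_
  rcases harc with h' | h'
  · exact Or.inl (fun b hb s hs =>
      h' b (Finset.mem_filter.1 hb).1 (Finset.mem_filter.1 hb).2 s hs)
  · exact Or.inr (fun b hb s hs =>
      h' b (Finset.mem_filter.1 hb).1 (Finset.mem_filter.1 hb).2 s hs)

end TournamentAux

/-! Statement 3 -/

theorem crossing_configuration (f c ε : ℝ) (hf : 0 < f) (hf1 : f < 1)
    (hc : 0 < c) (hc1 : c < 1) (hε0 : 0 < ε)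
    (hε : ε < min (Real.logb (c / 2) (1 - f)) (Real.logb (c / 4) (1 / 2)))
    (T : Tournament) (n : ℕ) (hn : T.n = n) (hcrit : T.EpsCritical ε)
    (S₁ S₂ : Finset (Fin T.n)) (hS : Disjoint S₁ S₂)
    (hS₁ : T.IsTransSet S₁) (hS₂ : T.IsTransSet S₂)
    (hS₁c : f * T.tr ≤ (S₁.card : ℝ)) (hS₂c : f * T.tr ≤ (S₂.card : ℝ))
    (A₁ A₂ : Finset (Fin T.n)) (hA : Disjoint A₁ A₂)
    (hA₁S : Disjoint A₁ (S₁ ∪ S₂)) (hA₂S : Disjoint A₂ (S₁ ∪ S₂))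
    (hA₁ : c * n ≤ (A₁.card : ℝ)) (hA₂ : c * n ≤ (A₂.card : ℝ)) :
    (∃ a ∈ A₁, ∃ x ∈ A₂, ∃ s₁ ∈ S₁, ∃ s₂ ∈ S₂,
      T.adj x a ∧ T.adj x s₂ ∧ T.adj a s₁) ∧
    (∃ d₁ ∈ A₁, ∃ d₂ ∈ A₂, ∃ u₁ ∈ S₁, ∃ u₂ ∈ S₂,
      T.adj u₁ d₁ ∧ T.adj d₂ d₁ ∧ T.adj u₂ d₂) := by
  classical
  subst hn
  have hn1 : 0 < T.n := by
    rcases Nat.eq_zero_or_pos T.n with h | h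
    · exfalso
      have h0 : (T.tr : ℝ) < ((T.n : ℝ)) ^ ε := hcrit.1
      rw [h] at h0
      rw [Nat.cast_zero, Real.zero_rpow hε0.ne'] at h0
      exact absurd h0 (not_lt.2 (Nat.cast_nonneg _))
    · exact h
  have htr1 : 1 ≤ T.tr := by
    have h1 : ({(⟨0, hn1⟩ : Fin T.n)} : Finset (Fin T.n)).card ≤ T.tr := by
      refine TournamentAux.le_trSet T (Finset.subset_univ _) ?_
      intro u hu v hv w hw huv hvw
      rw [Finset.mem_singleton] at hu hv
      subst hu; subst hv
      exact absurd huv (T.irrefl _)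
    simpa using h1
  have htrpos : (0:ℝ) < (T.tr : ℝ) := by exact_mod_cast htr1
  have hS₁ne : S₁.Nonempty :=
    Finset.card_pos.1 (by exact_mod_cast lt_of_lt_of_le (mul_pos hf htrpos) hS₁c)
  have hS₂ne : S₂.Nonempty :=
    Finset.card_pos.1 (by exact_mod_cast lt_of_lt_of_le (mul_pos hf htrpos) hS₂c)
  have hεa : ε < Real.logb (c/2) (1-f) := lt_of_lt_of_le hε (min_le_left _ _)
  have hεb : ε < Real.logb (c/4) (1/2) := lt_of_lt_of_le hε (min_le_right _ _)
  have hc2 : (0:ℝ) < c/2 := by linarith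
  have hc21 : c/2 < 1 := by linarith
  have h1f : 1 - f < (c/2) ^ ε := by
    have h := Real.rpow_lt_rpow_of_exponent_gt hc2 hc21 hεa
    rwa [Real.rpow_logb hc2 (ne_of_lt hc21) (by linarith : (0:ℝ) < 1 - f)] at h
  have h12 : (1:ℝ)/2 < (c/2) ^ ε := by
    have hc4 : (0:ℝ) < c/4 := by linarith
    have h := Real.rpow_lt_rpow_of_exponent_gt hc4 (by linarith) hεb
    rw [Real.rpow_logb hc4 (ne_of_lt (by linarith)) (by norm_num)] at h
    calc (1:ℝ)/2 < (c/4)^ε := h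
    _ ≤ (c/2)^ε := Real.rpow_le_rpow hc4.le (by linarith) hε0.le
  have hd₁ : Disjoint A₁ S₁ := hA₁S.mono_right Finset.subset_union_left
  have hd₂ : Disjoint A₂ S₂ := hA₂S.mono_right Finset.subset_union_right
  have arc1 : ∀ a ∈ A₁, ¬ (∃ s ∈ S₁, T.adj a s) → ∀ s ∈ S₁, T.adj s a := by
    intro a ha hna s hs
    push_neg at hna
    have hne : s ≠ a := fun h =>
      (Finset.disjoint_left.1 hA₁S ha) (h ▸ Finset.mem_union_left _ hs)
    rcases T.total a s (fun h => hne h.symm) with h | h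
    · exact absurd h (hna s hs)
    · exact h
  have key1 := TournamentAux.filter_bound T hε0 hcrit h1f hc A₁ S₁
    (fun a => ∃ s ∈ S₁, T.adj a s) hd₁ hS₁ hS₁c hS₁ne hA₁ (Or.inl arc1)
  have arc2 : ∀ a ∈ A₂, ¬ (∃ s ∈ S₂, T.adj a s) → ∀ s ∈ S₂, T.adj s a := by
    intro a ha hna s hs
    push_neg at hna
    have hne : s ≠ a := fun h =>
      (Finset.disjoint_left.1 hA₂S ha) (h ▸ Finset.mem_union_right _ hs)
    rcases T.total a s (fun h => hne h.symm) with h | h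
    · exact absurd h (hna s hs)
    · exact h
  have key2 := TournamentAux.filter_bound T hε0 hcrit h1f hc A₂ S₂
    (fun x => ∃ s ∈ S₂, T.adj x s) hd₂ hS₂ hS₂c hS₂ne hA₂ (Or.inl arc2)
  have arc3 : ∀ a ∈ A₁, ¬ (∃ u ∈ S₁, T.adj u a) → ∀ s ∈ S₁, T.adj a s := by
    intro a ha hna s hs
    push_neg at hna
    have hne : s ≠ a := fun h =>
      (Finset.disjoint_left.1 hA₁S ha) (h ▸ Finset.mem_union_left _ hs)
    rcases T.total a s (fun h => hne h.symm) with h | h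
    · exact h
    · exact absurd h (hna s hs)
  have key3 := TournamentAux.filter_bound T hε0 hcrit h1f hc A₁ S₁
    (fun d => ∃ u ∈ S₁, T.adj u d) hd₁ hS₁ hS₁c hS₁ne hA₁ (Or.inr arc3)
  have arc4 : ∀ a ∈ A₂, ¬ (∃ u ∈ S₂, T.adj u a) → ∀ s ∈ S₂, T.adj a s := by
    intro a ha hna s hs
    push_neg at hna
    have hne : s ≠ a := fun h =>
      (Finset.disjoint_left.1 hA₂S ha) (h ▸ Finset.mem_union_right _ hs)
    rcases T.total a s (fun h => hne h.symm) with h | h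
    · exact h
    · exact absurd h (hna s hs)
  have key4 := TournamentAux.filter_bound T hε0 hcrit h1f hc A₂ S₂
    (fun d => ∃ u ∈ S₂, T.adj u d) hd₂ hS₂ hS₂c hS₂ne hA₂ (Or.inr arc4)
  constructor
  · by_contra hno
    refine TournamentAux.no_big_pair T hε0 hcrit h12 hc
      (hA.mono (Finset.filter_subset _ _) (Finset.filter_subset _ _)) ?_ ?_ key1 key2 ?_
    · obtain ⟨s, hs⟩ := hS₁ne
      intro h
      exact (Finset.disjoint_left.1 hA₁S
        (Finset.filter_subset _ _ (h ▸ Finset.mem_univ s))) (Finset.mem_union_left _ hs)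
    · obtain ⟨s, hs⟩ := hS₂ne
      intro h
      exact (Finset.disjoint_left.1 hA₂S
        (Finset.filter_subset _ _ (h ▸ Finset.mem_univ s))) (Finset.mem_union_right _ hs)
    · intro a ha x hx
      obtain ⟨ha₁, s₁, hs₁, has₁⟩ := Finset.mem_filter.1 ha
      obtain ⟨hx₂, s₂, hs₂, hxs₂⟩ := Finset.mem_filter.1 hx
      have hax : a ≠ x := fun h => (Finset.disjoint_left.1 hA ha₁) (h ▸ hx₂)
      rcases T.total x a (fun h => hax h.symm) with h | h
      · exact absurd ⟨a, ha₁, x, hx₂, s₁, hs₁, s₂, hs₂, h, hxs₂, has₁⟩ hno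
      · exact h
  · by_contra hno
    refine TournamentAux.no_big_pair T hε0 hcrit h12 hc
      (hA.mono (Finset.filter_subset _ _) (Finset.filter_subset _ _)) ?_ ?_ key3 key4 ?_
    · obtain ⟨s, hs⟩ := hS₁ne
      intro h
      exact (Finset.disjoint_left.1 hA₁S
        (Finset.filter_subset _ _ (h ▸ Finset.mem_univ s))) (Finset.mem_union_left _ hs)
    · obtain ⟨s, hs⟩ := hS₂ne
      intro h
      exact (Finset.disjoint_left.1 hA₂S
        (Finset.filter_subset _ _ (h ▸ Finset.mem_univ s))) (Finset.mem_union_right _ hs)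
    · intro d₁ hd1 d₂ hd2
      obtain ⟨hd₁A, u₁, hu₁, hu₁d⟩ := Finset.mem_filter.1 hd1
      obtain ⟨hd₂A, u₂, hu₂, hu₂d⟩ := Finset.mem_filter.1 hd2
      have hne : d₁ ≠ d₂ := fun h => (Finset.disjoint_left.1 hA hd₁A) (h ▸ hd₂A)
      rcases T.total d₂ d₁ (fun h => hne h.symm) with h | h
      · exact absurd ⟨d₁, hd₁A, d₂, hd₂A, u₁, hu₁, u₂, hu₂, hu₁d, h, hu₂d⟩ hno
      · exact h
end

section
/- Let f_1,…,f_m, c, ε > 0 be constants with 0 < f_1,…,f_m, c < 1 and 0 < ε < log_{c/(2m)}(1 − f_i) for i = 1,…,m. Let T be an ε-critical tournament with |T| = n, let S_1,…,S_m be m pairwise disjoint transitive subtournaments of T with |S_i| ≥ f_i·tr(T) for each i, and let A ⊆ V(T) \ (V(S_1) ∪ … ∪ V(S_m)) with |A| ≥ cn. Then: (1) there exist a ∈ A and s_i ∈ S_i (i = 1,…,m) such that (a, s_i) is an arc of T for i = 1,…,m−1 and (s_m, a) is an arc of T; (2) there exist b ∈ A and u_i ∈ S_i (i = 1,…,m)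 such that (b, u_1) is an arc of T and (u_i, b) is an arc of T for i = 2,…,m; (3) there exist g ∈ A and p_i ∈ S_i (i = 1,…,m) such that (g, p_i) is an arc of T for all i; and (4) there exist v ∈ A and q_i ∈ S_i (i = 1,…,m) such that (q_i, v) is an arc of T for all i. -/
open scoped Classical

/-! Auxiliary lemmas for Statement 4 -/

lemma aux_trans_union (T : Tournament) (Y Z : Finset (Fin T.n))
    (hY : T.IsTransSet Y) (hZ : T.IsTransSet Z)
    (hYZ : ∀ y ∈ Y, ∀ t ∈ Z, T.adj y t) : T.IsTransSet (Y ∪ Z) := by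
  intro u hu v hv w hw huv hvw
  rw [Finset.mem_union] at hu hv hw
  rcases hu with hu | hu <;> rcases hv with hv | hv <;> rcases hw with hw | hw
  · exact hY u hu v hv w hw huv hvw
  · exact hYZ u hu w hw
  · exact absurd hvw (T.asymm _ _ (hYZ w hw v hv))
  · exact hYZ u hu w hw
  · exact absurd huv (T.asymm _ _ (hYZ v hv u hu))
  · exact absurd huv (T.asymm _ _ (hYZ v hv u hu))
  · exact absurd hvw (T.asymm _ _ (hYZ w hw v hv))
  · exact hZ u hu v hv w hw huv hvw

lemma aux_bddAbove (T : Tournament) (X : Finset (Fin T.n)) :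
    BddAbove {k | ∃ Y ⊆ X, T.IsTransSet Y ∧ Y.card = k} := by
  refine ⟨T.n, fun k hk => ?_⟩
  obtain ⟨Y, _, _, rfl⟩ := hk
  simpa using Finset.card_le_univ Y

lemma aux_card_le_trSet (T : Tournament) (X Y : Finset (Fin T.n)) (hYX : Y ⊆ X)
    (hY : T.IsTransSet Y) : Y.card ≤ T.trSet X :=
  le_csSup (aux_bddAbove T X) ⟨Y, hYX, hY, rfl⟩

lemma aux_trSet_attained (T : Tournament) (X : Finset (Fin T.n)) :
    ∃ Y ⊆ X, T.IsTransSet Y ∧ Y.card = T.trSet X := by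
  have hne : {k | ∃ Y ⊆ X, T.IsTransSet Y ∧ Y.card = k}.Nonempty :=
    ⟨0, ∅, Finset.empty_subset X, fun u hu => by simp at hu, rfl⟩
  exact Nat.sSup_mem hne (aux_bddAbove T X)

lemma aux_key (m : ℕ) (hm : 0 < m) (f : Fin m → ℝ) (c ε : ℝ)
    (hf : ∀ i, 0 < f i) (hf1 : ∀ i, f i < 1) (hc : 0 < c) (hc1 : c < 1) (hε0 : 0 < ε)
    (hεlog : ∀ i, ε < Real.logb (c / (2 * m)) (1 - f i))
    (T : Tournament) (hcrit : T.EpsCritical ε)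
    (S : Fin m → Finset (Fin T.n)) (hStrans : ∀ i, T.IsTransSet (S i))
    (hSsize : ∀ i, f i * T.tr ≤ ((S i).card : ℝ))
    (A : Finset (Fin T.n)) (hAdisj : ∀ i, Disjoint A (S i))
    (hA : c * T.n ≤ (A.card : ℝ)) (d : Fin m → Prop) :
    ∃ a ∈ A, ∀ i, ∃ t ∈ S i, ((d i ∧ T.adj a t) ∨ (¬ d i ∧ T.adj t a)) := by
  -- basic facts
  have htr0 : (0:ℝ) ≤ (T.tr : ℝ) := Nat.cast_nonneg _
  have hn0 : 0 < T.n := by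
    by_contra hn
    have hn' : T.n = 0 := by omega
    have := hcrit.1
    rw [hn'] at this
    simp [Real.zero_rpow hε0.ne'] at this
    exact absurd this (not_lt.mpr htr0)
  have htr1 : (1:ℝ) ≤ (T.tr : ℝ) := by
    have : ({⟨0, hn0⟩} : Finset (Fin T.n)).card ≤ T.tr :=
      aux_card_le_trSet T Finset.univ _ (Finset.subset_univ _)
        (fun u hu v hv w hw h1 _ => by
          simp at hu hv hw; subst hu; subst hv; exact absurd h1 (T.irrefl _))
    have h2 : ({⟨0, hn0⟩} : Finset (Fin T.n)).card = 1 := Finset.card_singleton _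
    rw [h2] at this
    exact_mod_cast this
  have hSne : ∀ i, (S i).Nonempty := by
    intro i
    rw [← Finset.card_pos]
    have h1 : (0:ℝ) < f i * T.tr := mul_pos (hf i) (lt_of_lt_of_le one_pos htr1)
    have := lt_of_lt_of_le h1 (hSsize i)
    exact_mod_cast this
  by_contra hcon
  push_neg at hcon
  -- the sets of vertices of A with all arcs to S i opposite to the prescription
  set Ai : Fin m → Finset (Fin T.n) := fun i =>
    A.filter (fun a => ∀ t ∈ S i, ((d i ∧ T.adj t a) ∨ (¬ d i ∧ T.adj a t))) with hAidef
  have hcover : A ⊆ Finset.univ.biUnion Ai := by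
    intro a ha
    obtain ⟨i, hi⟩ := hcon a ha
    refine Finset.mem_biUnion.mpr ⟨i, Finset.mem_univ _, ?_⟩
    refine Finset.mem_filter.mpr ⟨ha, fun t ht => ?_⟩
    have hne : a ≠ t := fun h => (Finset.disjoint_left.mp (hAdisj i)) ha (h ▸ ht)
    have hnt := hi t ht
    by_cases hd : d i
    · refine Or.inl ⟨hd, ?_⟩
      rcases T.total a t hne with h1 | h1
      · exact absurd h1 (hnt.1 hd)
      · exact h1
    · refine Or.inr ⟨hd, ?_⟩
      rcases T.total a t hne with h1 | h1
      · exact h1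
      · exact absurd h1 (hnt.2 hd)
  -- pigeonhole
  have hpig : ∃ i, c * T.n / m ≤ ((Ai i).card : ℝ) := by
    by_contra hall
    push_neg at hall
    have h1 : (A.card : ℝ) ≤ ∑ i : Fin m, ((Ai i).card : ℝ) := by
      have := Finset.card_le_card hcover
      have h2 := Finset.card_biUnion_le (s := (Finset.univ : Finset (Fin m))) (t := Ai)
      have h3 : A.card ≤ ∑ i : Fin m, (Ai i).card := le_trans this h2
      exact_mod_cast h3
    have h2 : ∑ i : Fin m, ((Ai i).card : ℝ) < ∑ _i : Fin m, (c * T.n / m) :=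
      Finset.sum_lt_sum_of_nonempty ⟨⟨0, hm⟩, Finset.mem_univ _⟩ (fun i _ => hall i)
    rw [Finset.sum_const, Finset.card_univ, Fintype.card_fin, nsmul_eq_mul] at h2
    have hm' : (m:ℝ) ≠ 0 := Nat.cast_ne_zero.mpr hm.ne'
    have : (m:ℝ) * (c * T.n / m) = c * T.n := by field_simp
    rw [this] at h2
    linarith
  obtain ⟨i, hpigi⟩ := hpig
  -- Ai i is a proper subset
  have hAiA : Ai i ⊆ A := Finset.filter_subset _ _
  have hAine : Ai i ≠ Finset.univ := by
    obtain ⟨t0, ht0⟩ := hSne i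
    intro h
    have : t0 ∈ Ai i := h ▸ Finset.mem_univ t0
    exact (Finset.disjoint_left.mp (hAdisj i)) (hAiA this) ht0
  -- a large transitive subset of Ai i
  obtain ⟨Y, hYAi, hYtrans, hYcard⟩ := aux_trSet_attained T (Ai i)
  -- base of the rpow
  set b : ℝ := c / (2 * m) with hbdef
  have hm1 : (1:ℝ) ≤ (m:ℝ) := Nat.one_le_cast.mpr hm
  have hb0 : 0 < b := div_pos hc (by linarith)
  have hb1 : b < 1 := by
    rw [hbdef, div_lt_one (by linarith)]
    linarith
  have hx0 : 0 < 1 - f i := by linarith [hf1 i]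
  have hbf : 1 - f i < b ^ ε := by
    have h1 : b ^ Real.logb b (1 - f i) < b ^ ε := by
      rw [Real.rpow_lt_rpow_left_iff_of_base_lt_one hb0 hb1]
      exact hεlog i
    rwa [Real.rpow_logb hb0 hb1.ne hx0] at h1
  -- chain of inequalities
  have hchain : (1 - f i) * (T.tr : ℝ) < (Y.card : ℝ) := by
    have h1 : b * T.n ≤ ((Ai i).card : ℝ) := by
      have : b * T.n ≤ c * T.n / m := by
        rw [hbdef]
        have hcn : (0:ℝ) ≤ c * T.n := by positivity
        rw [div_mul_eq_mul_div, div_le_div_iff₀ (by linarith) (by linarith)]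
        nlinarith
      linarith
    have h2 : (b * T.n) ^ ε ≤ ((Ai i).card : ℝ) ^ ε :=
      Real.rpow_le_rpow (by positivity) h1 hε0.le
    have h3 : ((Ai i).card : ℝ) ^ ε ≤ (T.trSet (Ai i) : ℝ) := hcrit.2 _ hAine
    have h4 : (b * T.n) ^ ε = b ^ ε * (T.n : ℝ) ^ ε :=
      Real.mul_rpow hb0.le (Nat.cast_nonneg _)
    have h5 : (1 - f i) * (T.tr : ℝ) < b ^ ε * (T.n : ℝ) ^ ε :=
      mul_lt_mul'' hbf hcrit.1 hx0.le htr0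
    rw [hYcard]
    calc (1 - f i) * (T.tr : ℝ) < b ^ ε * (T.n : ℝ) ^ ε := h5
      _ = (b * T.n) ^ ε := h4.symm
      _ ≤ ((Ai i).card : ℝ) ^ ε := h2
      _ ≤ (T.trSet (Ai i) : ℝ) := h3
  -- Y ∪ S i is transitive
  have hdisjYS : Disjoint Y (S i) :=
    Finset.disjoint_left.mpr (fun a ha => Finset.disjoint_left.mp (hAdisj i) (hAiA (hYAi ha)))
  have hZtrans : T.IsTransSet (Y ∪ S i) := by
    by_cases hd : d i
    · have harcs : ∀ t ∈ S i, ∀ y ∈ Y, T.adj t y := by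
        intro t ht y hy
        have := (Finset.mem_filter.mp (hYAi hy)).2 t ht
        rcases this with ⟨_, h⟩ | ⟨h, _⟩
        · exact h
        · exact absurd hd h
      rw [Finset.union_comm]
      exact aux_trans_union T (S i) Y (hStrans i) hYtrans harcs
    · have harcs : ∀ y ∈ Y, ∀ t ∈ S i, T.adj y t := by
        intro y hy t ht
        have := (Finset.mem_filter.mp (hYAi hy)).2 t ht
        rcases this with ⟨h, _⟩ | ⟨_, h⟩
        · exact absurd h hd
        · exact h
      exact aux_trans_union T Y (S i) hYtrans (hStrans i) harcs
  have hZcard : (Y ∪ S i).card = Y.card + (S i).card :=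
    Finset.card_union_of_disjoint hdisjYS
  have hle : ((Y ∪ S i).card : ℝ) ≤ (T.tr : ℝ) := by
    exact_mod_cast aux_card_le_trSet T Finset.univ _ (Finset.subset_univ _) hZtrans
  rw [hZcard] at hle
  push_cast at hle
  have := hSsize i
  linarith

/-! Statement 4 -/
theorem vertex_with_prescribed_orientation (m : ℕ) (f : Fin m → ℝ) (c ε : ℝ)
    (hf : ∀ i, 0 < f i) (hf1 : ∀ i, f i < 1) (hc : 0 < c) (hc1 : c < 1) (hε0 : 0 < ε)
    (hεlog : ∀ i, ε < Real.logb (c / (2 * m)) (1 - f i))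
    (T : Tournament) (n : ℕ) (hn : T.n = n) (hcrit : T.EpsCritical ε)
    (S : Fin m → Finset (Fin T.n)) (hStrans : ∀ i, T.IsTransSet (S i))
    (hSdisj : ∀ i j, i ≠ j → Disjoint (S i) (S j))
    (hSsize : ∀ i, f i * T.tr ≤ ((S i).card : ℝ))
    (A : Finset (Fin T.n)) (hAdisj : ∀ i, Disjoint A (S i))
    (hA : c * n ≤ (A.card : ℝ)) :
    (∃ a ∈ A, ∃ s : Fin m → Fin T.n, (∀ i, s i ∈ S i) ∧
      (∀ i : Fin m, i.val + 1 < m → T.adj a (s i)) ∧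
      (∀ i : Fin m, i.val + 1 = m → T.adj (s i) a)) ∧
    (∃ b ∈ A, ∃ u : Fin m → Fin T.n, (∀ i, u i ∈ S i) ∧
      (∀ i : Fin m, i.val = 0 → T.adj b (u i)) ∧
      (∀ i : Fin m, 0 < i.val → T.adj (u i) b)) ∧
    (∃ g ∈ A, ∃ p : Fin m → Fin T.n, (∀ i, p i ∈ S i) ∧ ∀ i, T.adj g (p i)) ∧
    (∃ v ∈ A, ∃ q : Fin m → Fin T.n, (∀ i, q i ∈ S i) ∧ ∀ i, T.adj (q i) v) := by
  rcases Nat.eq_zero_or_pos m with hm | hm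
  · subst hm
    have htr0 : (0:ℝ) ≤ (T.tr : ℝ) := Nat.cast_nonneg _
    have hn0 : 0 < T.n := by
      by_contra hn'
      have hn'' : T.n = 0 := by omega
      have := hcrit.1
      rw [hn''] at this
      simp [Real.zero_rpow hε0.ne'] at this
      exact absurd this (not_lt.mpr htr0)
    have hAne : A.Nonempty := by
      rw [← Finset.card_pos]
      have : (0:ℝ) < c * n := by
        have : 0 < n := hn ▸ hn0
        positivity
      have := lt_of_lt_of_le this hA
      exact_mod_cast this
    obtain ⟨a, ha⟩ := hAne
    exact ⟨⟨a, ha, Fin.elim0, fun i => i.elim0, fun i => i.elim0, fun i => i.elim0⟩,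
      ⟨a, ha, Fin.elim0, fun i => i.elim0, fun i => i.elim0, fun i => i.elim0⟩,
      ⟨a, ha, Fin.elim0, fun i => i.elim0, fun i => i.elim0⟩,
      ⟨a, ha, Fin.elim0, fun i => i.elim0, fun i => i.elim0⟩⟩
  · have hA' : c * T.n ≤ (A.card : ℝ) := by rw [← hn] at hA; exact hA
    refine ⟨?_, ?_, ?_, ?_⟩
    · obtain ⟨a, ha, h⟩ := aux_key m hm f c ε hf hf1 hc hc1 hε0 hεlog T hcrit S hStrans
        hSsize A hAdisj hA' (fun i => i.val + 1 < m)
      choose t ht using h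
      refine ⟨a, ha, t, fun i => (ht i).1, ?_, ?_⟩
      · intro i hi
        rcases (ht i).2 with ⟨_, h⟩ | ⟨hnd, _⟩
        · exact h
        · exact absurd hi hnd
      · intro i hi
        rcases (ht i).2 with ⟨hd, _⟩ | ⟨_, h⟩
        · omega
        · exact h
    · obtain ⟨a, ha, h⟩ := aux_key m hm f c ε hf hf1 hc hc1 hε0 hεlog T hcrit S hStrans
        hSsize A hAdisj hA' (fun i => i.val = 0)
      choose t ht using h
      refine ⟨a, ha, t, fun i => (ht i).1, ?_, ?_⟩
      · intro i hi
        rcases (ht i).2 with ⟨_, h⟩ | ⟨hnd, _⟩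
        · exact h
        · exact absurd hi hnd
      · intro i hi
        rcases (ht i).2 with ⟨hd, _⟩ | ⟨_, h⟩
        · omega
        · exact h
    · obtain ⟨a, ha, h⟩ := aux_key m hm f c ε hf hf1 hc hc1 hε0 hεlog T hcrit S hStrans
        hSsize A hAdisj hA' (fun _ => True)
      choose t ht using h
      refine ⟨a, ha, t, fun i => (ht i).1, ?_⟩
      intro i
      rcases (ht i).2 with ⟨_, h⟩ | ⟨hnd, _⟩
      · exact h
      · exact absurd trivial hnd
    · obtain ⟨a, ha, h⟩ := aux_key m hm f c ε hf hf1 hc hc1 hε0 hεlog T hcrit S hStrans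
        hSsize A hAdisj hA' (fun _ => False)
      choose t ht using h
      refine ⟨a, ha, t, fun i => (ht i).1, ?_⟩
      intro i
      rcases (ht i).2 with ⟨hd, _⟩ | ⟨_, h⟩
      · exact hd.elim
      · exact h
end
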